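/- Exponential case. Let X be an exponential random variable with mean λ > 0, so μ = λ and σ² = λ², and let μ₃ = E[(X − λ)³] and μ₄ = E[(X − λ)⁴]. Then, taking f(x) = x² (so f(μ) = λ² and f′(μ) = 2λ), the asymptotic-variance expression of the variance ratio test satisfies (σ⁶ f′(μ)² − 2 f(μ) σ² μ₃ f′(μ) + f(μ)² (μ₄ − σ⁴)) / f(μ)⁴ = 4; in particular it is not equal to 2. -/

import Mathlib

/-!
The raw moments of `expMeasure r` are Gamma integrals, `∫ xⁿ = n! / rⁿ`. Expanding `(x - λ)ᵏ`
by the binomial theorem, the central moments of the exponential law with mean `λ` are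
`λᵏ · ∑ⱼ (-1)ᵏ⁻ʲ C(k, j) j! = λᵏ · !k`, where `!k` counts the derangements of `k` points;
hence `μ₃ = 2λ³` and `μ₄ = 9λ⁴`. With `f(μ) = λ²` and `f′(μ) = 2λ` the three terms of the
numerator are `4λ⁸ - 8λ⁸ + 8λ⁸`, and the expression equals `4`.
-/

open MeasureTheory ProbabilityTheory Real Set
open scoped Nat

namespace Real

lemma rpow_sub_one_mul_pow {x : ℝ} (hx : 0 < x) (a : ℝ) (n : ℕ) :
    x ^ (a - 1) * x ^ n = x ^ (a + n - 1) := by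
  rw [← rpow_natCast, ← rpow_add hx]
  ring_nf

end Real

theorem numDerangements_eq_sum_choose_mul_factorial (k : ℕ) :
    (numDerangements k : ℤ) =
      ∑ j ∈ Finset.range (k + 1), (-1 : ℤ) ^ (k - j) * k.choose j * j ! := by
  rw [numDerangements_sum, ← Finset.sum_range_reflect]
  refine Finset.sum_congr rfl fun j hj ↦ ?_
  have hj : j ≤ k := Nat.lt_succ_iff.1 (Finset.mem_range.1 hj)
  rw [add_tsub_cancel_right, Nat.ascFactorial_eq_factorial_mul_choose, Nat.sub_sub_self hj,
    Nat.sub_add_cancel hj]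
  push_cast
  ring

namespace MeasureTheory

theorem integral_sub_pow_eq_sum {μ : Measure ℝ} (c : ℝ) (k : ℕ)
    (h : ∀ j ≤ k, Integrable (fun x ↦ x ^ j) μ) :
    ∫ x, (x - c) ^ k ∂μ =
      ∑ j ∈ Finset.range (k + 1), (∫ x, x ^ j ∂μ) * (-c) ^ (k - j) * k.choose j := by
  simp_rw [sub_eq_add_neg, add_pow]
  rw [integral_finsetSum]
  · simp_rw [integral_mul_const]
  · exact fun j hj ↦ ((h j (Nat.lt_succ_iff.1 (Finset.mem_range.1 hj))).mul_const _).mul_const _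

end MeasureTheory

namespace ProbabilityTheory

section Gamma

variable {a r : ℝ}

lemma gammaMeasure_eq_withDensity_restrict_Ioi (a r : ℝ) :
    gammaMeasure a r = (volume.restrict (Ioi 0)).withDensity
      fun x ↦ ENNReal.ofReal (r ^ a / Gamma a * x ^ (a - 1) * exp (-(r * x))) := by
  have : gammaPDF a r = (Ici 0).indicator
      fun x ↦ ENNReal.ofReal (r ^ a / Gamma a * x ^ (a - 1) * exp (-(r * x))) := by
    ext x
    by_cases hx : 0 ≤ x <;> simp [gammaPDF_eq, hx]
  rw [gammaMeasure, this, withDensity_indicator measurableSet_Ici,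
    Measure.restrict_congr_set Ioi_ae_eq_Ici]

lemma integrable_gammaMeasure_iff (ha : 0 < a) (hr : 0 < r) {g : ℝ → ℝ} :
    Integrable g (gammaMeasure a r) ↔
      IntegrableOn (fun x ↦ r ^ a / Gamma a * x ^ (a - 1) * exp (-(r * x)) * g x) (Ioi 0) := by
  rw [gammaMeasure_eq_withDensity_restrict_Ioi, integrable_withDensity_iff_integrable_smul'
    (by fun_prop) (ae_of_all _ fun _ ↦ ENNReal.ofReal_lt_top)]
  refine integrable_congr <|
    (ae_restrict_iff' measurableSet_Ioi).2 (ae_of_all _ fun x (hx : 0 < x) ↦ ?_)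
  simp only [smul_eq_mul]
  rw [ENNReal.toReal_ofReal (by have := Gamma_pos_of_pos ha; positivity)]

lemma integral_gammaMeasure (ha : 0 < a) (hr : 0 < r) (g : ℝ → ℝ) :
    ∫ x, g x ∂gammaMeasure a r =
      ∫ x in Ioi 0, r ^ a / Gamma a * x ^ (a - 1) * exp (-(r * x)) * g x := by
  rw [gammaMeasure_eq_withDensity_restrict_Ioi, integral_withDensity_eq_integral_toReal_smul
    (by fun_prop) (ae_of_all _ fun _ ↦ ENNReal.ofReal_lt_top)]
  refine setIntegral_congr_fun measurableSet_Ioi fun x (hx : 0 < x) ↦ ?_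
  simp only [smul_eq_mul]
  rw [ENNReal.toReal_ofReal (by have := Gamma_pos_of_pos ha; positivity)]

lemma integrable_pow_gammaMeasure (ha : 0 < a) (hr : 0 < r) (n : ℕ) :
    Integrable (fun x ↦ x ^ n) (gammaMeasure a r) := by
  rw [integrable_gammaMeasure_iff ha hr]
  have : IntegrableOn (fun x ↦ r ^ a / Gamma a * (x ^ (a + n - 1) * exp (-r * x ^ (1 : ℝ))))
      (Ioi 0) := (integrableOn_rpow_mul_exp_neg_mul_rpow (by linarith [n.cast_nonneg (α := ℝ)])
        one_pos hr).const_mul _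
  refine this.congr_fun (fun x (hx : 0 < x) ↦ ?_) measurableSet_Ioi
  beta_reduce
  rw [rpow_one, neg_mul, mul_right_comm _ _ (x ^ n), mul_assoc _ (x ^ (a - 1)),
    rpow_sub_one_mul_pow hx, mul_assoc]

lemma integral_pow_gammaMeasure (ha : 0 < a) (hr : 0 < r) (n : ℕ) :
    ∫ x, x ^ n ∂gammaMeasure a r = Gamma (a + n) / (Gamma a * r ^ n) := by
  have hΓ := (Gamma_pos_of_pos ha).ne'
  calc ∫ x, x ^ n ∂gammaMeasure a r
      = r ^ a / Gamma a * ∫ x in Ioi 0, x ^ (a + n - 1) * exp (-(r * x)) := by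
        rw [integral_gammaMeasure ha hr, ← integral_const_mul]
        refine setIntegral_congr_fun measurableSet_Ioi fun x (hx : 0 < x) ↦ ?_
        rw [← rpow_sub_one_mul_pow hx]
        ring
    _ = Gamma (a + n) / (Gamma a * r ^ n) := by
        rw [integral_rpow_mul_exp_neg_mul_Ioi (by positivity) hr, one_div, inv_rpow hr.le,
          rpow_add hr, rpow_natCast]
        field_simp

lemma integral_pow_expMeasure (hr : 0 < r) (n : ℕ) :
    ∫ x, x ^ n ∂expMeasure r = n ! / r ^ n := by
  rw [expMeasure, integral_pow_gammaMeasure one_pos hr, add_comm, Gamma_nat_eq_factorial,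
    Gamma_one, one_mul]

end Gamma

theorem integral_sub_pow_expMeasure_inv {lam : ℝ} (hlam : 0 < lam) (k : ℕ) :
    ∫ x, (x - lam) ^ k ∂expMeasure lam⁻¹ = lam ^ k * numDerangements k := by
  have hr : 0 < lam⁻¹ := inv_pos.2 hlam
  rw [integral_sub_pow_eq_sum (μ := expMeasure lam⁻¹) _ _
      fun j _ ↦ integrable_pow_gammaMeasure one_pos hr j,
    ← Int.cast_natCast, numDerangements_eq_sum_choose_mul_factorial]
  push_cast
  rw [Finset.mul_sum]
  refine Finset.sum_congr rfl fun j hj ↦ ?_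
  have hsplit : lam ^ k = lam ^ j * lam ^ (k - j) := by
    rw [← pow_add, Nat.add_sub_cancel' (Nat.lt_succ_iff.1 (Finset.mem_range.1 hj))]
  rw [integral_pow_expMeasure hr, hsplit, neg_pow, inv_pow, div_inv_eq_mul]
  ring

end ProbabilityTheory

theorem variance_ratio_asymptotic_variance_exponential_general
    {Ω : Type*} [MeasurableSpace Ω] (P : Measure Ω)
    (lam : ℝ) (hlam : 0 < lam)
    (X : Ω → ℝ)
    (hdist : Measure.map X P = expMeasure lam⁻¹)
    (μ3 μ4 : ℝ)
    (hμ3 : μ3 = ∫ ω, (X ω - lam) ^ 3 ∂P)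
    (hμ4 : μ4 = ∫ ω, (X ω - lam) ^ 4 ∂P)
    (f : ℝ → ℝ) (hf : f = fun x => x ^ 2) :
    (lam ^ 6 * (deriv f lam) ^ 2 - 2 * f lam * lam ^ 2 * μ3 * deriv f lam
        + (f lam) ^ 2 * (μ4 - lam ^ 4)) / (f lam) ^ 4 = 4 ∧
      (lam ^ 6 * (deriv f lam) ^ 2 - 2 * f lam * lam ^ 2 * μ3 * deriv f lam
        + (f lam) ^ 2 * (μ4 - lam ^ 4)) / (f lam) ^ 4 ≠ 2 := by
  have hX : AEMeasurable X P := .of_map_ne_zero <| by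
    rw [hdist]
    exact (isProbabilityMeasure_gammaMeasure one_pos (inv_pos.2 hlam)).ne_zero
  have hmoment (k : ℕ) : ∫ ω, (X ω - lam) ^ k ∂P = lam ^ k * numDerangements k := by
    rw [← integral_map (f := fun x ↦ (x - lam) ^ k) hX (by fun_prop), hdist,
      integral_sub_pow_expMeasure_inv hlam]
  have hμ3' : μ3 = 2 * lam ^ 3 := by rw [hμ3, hmoment]; norm_num [numDerangements_add_two]; ring
  have hμ4' : μ4 = 9 * lam ^ 4 := by rw [hμ4, hmoment]; norm_num [numDerangements_add_two]; ring
  have hderiv : deriv f lam = 2 * lam := by simp [hf]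
  have hvalue : (lam ^ 6 * (deriv f lam) ^ 2 - 2 * f lam * lam ^ 2 * μ3 * deriv f lam
      + (f lam) ^ 2 * (μ4 - lam ^ 4)) / (f lam) ^ 4 = 4 := by
    rw [hderiv, hμ3', hμ4', hf]
    field_simp
    ring
  exact ⟨hvalue, by norm_num [hvalue]⟩

/-- Exponential case. For an exponential random variable with mean `lam > 0` (so
`μ = lam`, `σ² = lam²`), taking `f x = x²` (so `f μ = lam²` and `f′(μ) = 2 lam`), the
asymptotic-variance expression of the variance ratio test,
`(σ⁶ f′(μ)² - 2 f(μ) σ² μ₃ f′(μ) + f(μ)² (μ₄ - σ⁴)) / f(μ)⁴`, equals `4`; in particular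
it is not equal to `2`. -/
theorem variance_ratio_asymptotic_variance_exponential
    {Ω : Type*} [MeasurableSpace Ω] (P : Measure Ω) [IsProbabilityMeasure P]
    (lam : ℝ) (hlam : 0 < lam)
    (X : Ω → ℝ) (hX : Measurable X)
    (hdist : Measure.map X P = expMeasure lam⁻¹)
    (μ3 μ4 : ℝ)
    (hμ3 : μ3 = ∫ ω, (X ω - lam) ^ 3 ∂P)
    (hμ4 : μ4 = ∫ ω, (X ω - lam) ^ 4 ∂P)
    (f : ℝ → ℝ) (hf : f = fun x => x ^ 2) :
    (lam ^ 6 * (deriv f lam) ^ 2 - 2 * f lam * lam ^ 2 * μ3 * deriv f lam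
        + (f lam) ^ 2 * (μ4 - lam ^ 4)) / (f lam) ^ 4 = 4 ∧
      (lam ^ 6 * (deriv f lam) ^ 2 - 2 * f lam * lam ^ 2 * μ3 * deriv f lam
        + (f lam) ^ 2 * (μ4 - lam ^ 4)) / (f lam) ^ 4 ≠ 2 :=
  variance_ratio_asymptotic_variance_exponential_general P lam hlam X hdist μ3 μ4 hμ3 hμ4 f hf
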